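/- Let (J, {·,·,·}, α) be a Hom-Jordan triple system over a field k of characteristic 0 whose two twisting maps are both equal to α. Define the triple product [x,y,z] = {x,y,z} − {y,x,z}. Then L(J) = (J, [·,·,·], α) is a Hom-Lie triple system; and if J is multiplicative, then so is L(J). -/
import Mathlib


/-- The Meyberg bracket `[x,y,z] = {x,y,z} − {y,x,z}` of a triple product. -/
def meybergBracket {k J : Type*} [Field k] [AddCommGroup J] [Module k J]
    (T : J →ₗ[k] J →ₗ[k] J →ₗ[k] J) (x y z : J) : J :=
  T x y z - T y x z

/-- If `(J, {·,·,·}, α)` is a Hom-Jordan triple system with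
both twisting maps equal to `α`, then `L(J) = (J, [·,·,·], α)` with
`[x,y,z] = {x,y,z} − {y,x,z}` is a Hom-Lie triple system; and if `J` is
multiplicative, then so is `L(J)`. -/
theorem homJordan_gives_homLie_triple_system
    {k J : Type*} [Field k] [CharZero k] [AddCommGroup J] [Module k J]
    (T : J →ₗ[k] J →ₗ[k] J →ₗ[k] J) (α : J →ₗ[k] J)
    (houter : ∀ x y z : J, T x y z = T z y x)
    (hJordan : ∀ u v w x y : J,
      T (α x) (α y) (T u v w) - T (α u) (α v) (T x y w)
        = T (T x y u) (α v) (α w) - T (α u) (T y x v) (α w)) :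
    -- left anti-symmetry
    (∀ u v w : J, meybergBracket T u v w = - meybergBracket T v u w) ∧
    -- the ternary Jacobi identity
    (∀ u v w : J,
      meybergBracket T u v w + meybergBracket T w u v
        + meybergBracket T v w u = 0) ∧
    -- the ternary Hom-Nambu identity with both twisting maps equal to α
    (∀ u v w x y : J,
      meybergBracket T (α x) (α y) (meybergBracket T u v w)
        = meybergBracket T (meybergBracket T x y u) (α v) (α w)
          + meybergBracket T (α u) (meybergBracket T x y v) (α w)
          + meybergBracket T (α u) (α v) (meybergBracket T x y w)) ∧
    -- if J is multiplicative, then so is L(J)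
    ((∀ x y z : J, α (T x y z) = T (α x) (α y) (α z)) →
      ∀ x y z : J,
        α (meybergBracket T x y z)
          = meybergBracket T (α x) (α y) (α z)) := by
  refine ⟨?_, ?_, ?_, ?_⟩
  · intro u v w
    simp only [meybergBracket]
    abel
  · intro u v w
    simp only [meybergBracket]
    rw [houter u v w, houter w u v, houter v w u]
    abel
  · intro u v w x y
    simp only [meybergBracket, map_sub, LinearMap.sub_apply]
    have h1 := hJordan u v w x y
    have h2 := hJordan u v w y x
    have h3 := hJordan v u w x y
    have h4 := hJordan v u w y x
    linear_combination (norm := abel) h1 - h2 - h3 + h4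
  · intro hmul x y z
    simp only [meybergBracket, map_sub, hmul]
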